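/- arXiv:2605.03478 — 3 statements merged into one kernel-verified Lean document; each statement's English description precedes it below -/
import Mathlib

section
/- Let G be a finite simple graph with an orientation of its edges and triangles. The (e,e') entry of the Helmholtzian matrix H(G) = B Bᵀ + Cᵀ C equals: △(e) + 2 if e' = e; -1 if e⁺ = e'⁻ or e⁻ = e'⁺ and e, e' lie in no common triangle; 1 if e⁺ = e'⁺ or e⁻ = e'⁻ and e, e' lie in no common triangle; and 0 otherwise. -/
/-!
Write `δ v` for the indicator vector of a vertex, so that the row of `B` at `e` is
`δ e⁺ - δ e⁻`. Hence `(B Bᵀ)(e, e')` is `2` on the diagonal and otherwise records the endpoint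
the two edges share (at most one, as they are distinct): `+1` for a shared head or a shared
tail, `-1` when one edge ends where the other starts.

`(Cᵀ C)(e, e') = ∑ₜ C(t, e) C(t, e')`. On the diagonal each triangle containing `e` contributes
`1`, giving `△(e)`. Two distinct edges span at least three vertices, so they lie in at most one
common triangle `t`, and then only `t` contributes. Two sides of the cyclically oriented `t` meet
head-to-tail exactly when both agree or both disagree with `t`, so this contribution cancels
the one of `B Bᵀ`.
-/

open scoped Classical
open scoped Matrix

namespace HelmPaper

variable {V : Type} [Fintype V] [DecidableEq V]

/-- The set of triangles of `G`, i.e. the 3-element cliques of `G`. -/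
abbrev Triangle (G : SimpleGraph V) : Type :=
  {s : Finset V // s.card = 3 ∧ G.IsClique (s : Set V)}

/-- An orientation of the edges of `G`: each edge `e` gets a head `e⁺` and a tail `e⁻`. -/
structure Orientation (G : SimpleGraph V) where
  head : G.edgeSet → V
  tail : G.edgeSet → V
  consistent : ∀ e : G.edgeSet, (e : Sym2 V) = s(head e, tail e)

/-- A cyclic orientation of each triangle of `G`, recorded by a representative ordered
triple of its three vertices. -/
structure TriOrientation (G : SimpleGraph V) where
  fst : Triangle G → V
  snd : Triangle G → V
  trd : Triangle G → V
  consistent : ∀ t : Triangle G, ({fst t, snd t, trd t} : Finset V) = t.val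

/-- The edge-vertex incidence matrix `B`. -/
noncomputable def bMat (G : SimpleGraph V) (o : Orientation G) : Matrix G.edgeSet V ℝ :=
  fun e v => if v = o.head e then 1 else if v = o.tail e then -1 else 0

/-- The oriented edge `e` agrees with the cyclic orientation of the triangle `t`. -/
def Agrees {G : SimpleGraph V} (o : Orientation G) (τ : TriOrientation G)
    (e : G.edgeSet) (t : Triangle G) : Prop :=
  (o.tail e = τ.fst t ∧ o.head e = τ.snd t) ∨
  (o.tail e = τ.snd t ∧ o.head e = τ.trd t) ∨
  (o.tail e = τ.trd t ∧ o.head e = τ.fst t)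

/-- The oriented edge `e` disagrees with the cyclic orientation of the triangle `t`. -/
def Disagrees {G : SimpleGraph V} (o : Orientation G) (τ : TriOrientation G)
    (e : G.edgeSet) (t : Triangle G) : Prop :=
  (o.head e = τ.fst t ∧ o.tail e = τ.snd t) ∨
  (o.head e = τ.snd t ∧ o.tail e = τ.trd t) ∨
  (o.head e = τ.trd t ∧ o.tail e = τ.fst t)

/-- The triangle-edge incidence matrix `C`. -/
noncomputable def cMat (G : SimpleGraph V) (o : Orientation G) (τ : TriOrientation G) :
    Matrix (Triangle G) G.edgeSet ℝ :=
  fun t e => if Agrees o τ e t then 1 else if Disagrees o τ e t then -1 else 0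

/-- The Helmholtzian matrix `H(G) = B Bᵀ + Cᵀ C`. -/
noncomputable def helm (G : SimpleGraph V) (o : Orientation G) (τ : TriOrientation G) :
    Matrix G.edgeSet G.edgeSet ℝ :=
  bMat G o * (bMat G o)ᵀ + (cMat G o τ)ᵀ * cMat G o τ

/-- The edge `e` (as an unordered pair of vertices) lies in the triangle `t`. -/
def EdgeInTri (G : SimpleGraph V) (e : Sym2 V) (t : Triangle G) : Prop :=
  ∀ v ∈ e, v ∈ t.val

/-- The triangle degree `△(e)`: the number of triangles of `G` containing the edge `e`. -/
noncomputable def triDeg (G : SimpleGraph V) (e : Sym2 V) : ℕ :=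
  (Finset.univ.filter fun t : Triangle G => EdgeInTri G e t).card

lemma _root_.Finset.three_le_card_union_of_card_eq_two {α : Type*} [DecidableEq α]
    {s s' : Finset α} (hs : s.card = 2) (hs' : s'.card = 2) (hne : s ≠ s') :
    3 ≤ (s ∪ s').card := by
  by_contra! hlt
  have h₁ : s = s ∪ s' := Finset.eq_of_subset_of_card_le Finset.subset_union_left (by omega)
  have h₂ : s' = s ∪ s' := Finset.eq_of_subset_of_card_le Finset.subset_union_right (by omega)
  exact hne (h₁.trans h₂.symm)

section Incidence

omit [Fintype V]

namespace Orientation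

variable {G : SimpleGraph V} (o : Orientation G)

omit [DecidableEq V] in
lemma head_ne_tail (e : G.edgeSet) : o.head e ≠ o.tail e := by
  have he := e.property
  rw [o.consistent e, SimpleGraph.mem_edgeSet] at he
  exact he.ne

omit [DecidableEq V] in
lemma eq_iff {e e' : G.edgeSet} :
    e = e' ↔ o.head e = o.head e' ∧ o.tail e = o.tail e' ∨
      o.head e = o.tail e' ∧ o.tail e = o.head e' := by
  rw [Subtype.ext_iff, o.consistent e, o.consistent e', Sym2.eq_iff]

lemma pair_ne_pair_of_ne {e e' : G.edgeSet} (hne : e ≠ e') :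
    ({o.head e, o.tail e} : Finset V) ≠ {o.head e', o.tail e'} := by
  intro h
  have hh : o.head e ∈ ({o.head e', o.tail e'} : Finset V) := h ▸ by simp
  have ht : o.tail e ∈ ({o.head e', o.tail e'} : Finset V) := h ▸ by simp
  simp only [Finset.mem_insert, Finset.mem_singleton] at hh ht
  have := o.head_ne_tail e
  exact hne (o.eq_iff.mpr (by rcases hh with hh | hh <;> rcases ht with ht | ht <;> simp_all))

end Orientation

lemma TriOrientation.distinct {G : SimpleGraph V} (τ : TriOrientation G) (t : Triangle G) :
    τ.fst t ≠ τ.snd t ∧ τ.snd t ≠ τ.trd t ∧ τ.fst t ≠ τ.trd t := by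
  have h := τ.consistent t ▸ t.prop.1
  refine ⟨?_, ?_, ?_⟩ <;> intro heq <;> rw [heq] at h <;> simp at h <;>
    exact absurd h (Finset.card_le_two.trans_lt (by norm_num)).ne

variable {G : SimpleGraph V}

lemma edgeInTri_iff_subset (o : Orientation G) (e : G.edgeSet) (t : Triangle G) :
    EdgeInTri G (e : Sym2 V) t ↔ {o.head e, o.tail e} ⊆ t.val := by
  simp [EdgeInTri, Finset.insert_subset_iff, o.consistent e]

lemma edgeInTri_iff_agrees_or_disagrees (o : Orientation G) (τ : TriOrientation G)
    (e : G.edgeSet) (t : Triangle G) :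
    EdgeInTri G (e : Sym2 V) t ↔ Agrees o τ e t ∨ Disagrees o τ e t := by
  rw [edgeInTri_iff_subset o, ← τ.consistent t]
  have := o.head_ne_tail e
  simp only [Finset.insert_subset_iff, Finset.singleton_subset_iff, Finset.mem_insert,
    Finset.mem_singleton, Agrees, Disagrees]
  grind

lemma eq_of_edgeInTri (o : Orientation G) {e e' : G.edgeSet} (hne : e ≠ e') {t t' : Triangle G}
    (ht : EdgeInTri G (e : Sym2 V) t ∧ EdgeInTri G (e' : Sym2 V) t)
    (ht' : EdgeInTri G (e : Sym2 V) t' ∧ EdgeInTri G (e' : Sym2 V) t') : t = t' := by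
  have hcard := Finset.three_le_card_union_of_card_eq_two (Finset.card_pair (o.head_ne_tail e))
    (Finset.card_pair (o.head_ne_tail e')) (o.pair_ne_pair_of_ne hne)
  have hval : ∀ u : Triangle G, EdgeInTri G (e : Sym2 V) u ∧ EdgeInTri G (e' : Sym2 V) u →
      {o.head e, o.tail e} ∪ {o.head e', o.tail e'} = u.val := by
    rintro u ⟨hu, hu'⟩
    rw [edgeInTri_iff_subset o] at hu hu'
    exact Finset.eq_of_subset_of_card_le (Finset.union_subset hu hu')
      (by rw [u.prop.1]; exact hcard)
  exact Subtype.ext ((hval t ht).symm.trans (hval t' ht'))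

variable {o : Orientation G} {τ : TriOrientation G}

lemma not_agrees_and_disagrees (e : G.edgeSet) (t : Triangle G) :
    ¬(Agrees o τ e t ∧ Disagrees o τ e t) := by
  have := τ.distinct t
  have := o.head_ne_tail e
  simp only [Agrees, Disagrees]
  grind

lemma cMat_of_agrees {e : G.edgeSet} {t : Triangle G} (h : Agrees o τ e t) :
    cMat G o τ t e = 1 :=
  if_pos h

lemma cMat_of_disagrees {e : G.edgeSet} {t : Triangle G} (h : Disagrees o τ e t) :
    cMat G o τ t e = -1 :=
  (if_neg fun h' => not_agrees_and_disagrees e t ⟨h', h⟩).trans (if_pos h)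

lemma cMat_eq_zero_of_not_edgeInTri {e : G.edgeSet} {t : Triangle G}
    (h : ¬EdgeInTri G (e : Sym2 V) t) : cMat G o τ t e = 0 := by
  rw [edgeInTri_iff_agrees_or_disagrees o τ, not_or] at h
  simp [cMat, h.1, h.2]

lemma cMat_mul_self (e : G.edgeSet) (t : Triangle G) :
    cMat G o τ t e * cMat G o τ t e = if EdgeInTri G (e : Sym2 V) t then 1 else 0 := by
  have := not_agrees_and_disagrees (o := o) (τ := τ) e t
  rw [edgeInTri_iff_agrees_or_disagrees o τ]
  unfold cMat
  split_ifs <;> simp_all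

lemma cMat_mul_cMat_eq_zero {e e' : G.edgeSet} {t : Triangle G}
    (h : ¬(EdgeInTri G (e : Sym2 V) t ∧ EdgeInTri G (e' : Sym2 V) t)) :
    cMat G o τ t e * cMat G o τ t e' = 0 := by
  rcases not_and_or.mp h with h | h <;> simp [cMat_eq_zero_of_not_edgeInTri h]

lemma bMat_apply (e : G.edgeSet) (v : V) :
    bMat G o e v = (if v = o.head e then 1 else 0) - (if v = o.tail e then 1 else 0) := by
  have := o.head_ne_tail e
  unfold bMat
  split_ifs <;> simp_all

end Incidence

variable {G : SimpleGraph V} {o : Orientation G} {τ : TriOrientation G}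

lemma bMat_mul_transpose_apply (e e' : G.edgeSet) :
    (bMat G o * (bMat G o)ᵀ) e e' = bMat G o e' (o.head e) - bMat G o e' (o.tail e) := by
  simp only [Matrix.mul_apply, Matrix.transpose_apply, bMat_apply e, sub_mul, ite_mul, one_mul,
    zero_mul, Finset.sum_sub_distrib, Finset.sum_ite_eq', Finset.mem_univ, if_true]

lemma bMat_mul_transpose_apply_self (e : G.edgeSet) : (bMat G o * (bMat G o)ᵀ) e e = 2 := by
  have := o.head_ne_tail e
  simp [bMat_mul_transpose_apply, bMat_apply, this, this.symm]
  norm_num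

section OffDiagonal

variable {e e' : G.edgeSet} (hne : e ≠ e')
include hne

lemma bMat_mul_transpose_apply_of_head_tail_meet
    (h : o.head e = o.tail e' ∨ o.tail e = o.head e') :
    (bMat G o * (bMat G o)ᵀ) e e' = -1 := by
  have := o.head_ne_tail e
  have := o.head_ne_tail e'
  rw [Ne, o.eq_iff] at hne
  simp only [bMat_mul_transpose_apply, bMat_apply]
  rcases h with h | h <;> split_ifs <;> simp_all

lemma bMat_mul_transpose_apply_of_like_ends_meet
    (h : o.head e = o.head e' ∨ o.tail e = o.tail e') :
    (bMat G o * (bMat G o)ᵀ) e e' = 1 := by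
  have := o.head_ne_tail e
  have := o.head_ne_tail e'
  rw [Ne, o.eq_iff] at hne
  simp only [bMat_mul_transpose_apply, bMat_apply]
  rcases h with h | h <;> split_ifs <;> simp_all

end OffDiagonal

lemma bMat_mul_transpose_apply_of_not_meet {e e' : G.edgeSet}
    (h : ¬(o.head e = o.tail e' ∨ o.tail e = o.head e'))
    (h' : ¬(o.head e = o.head e' ∨ o.tail e = o.tail e')) :
    (bMat G o * (bMat G o)ᵀ) e e' = 0 := by
  rw [not_or] at h h'
  simp [bMat_mul_transpose_apply, bMat_apply, h.1, h.2, h'.1, h'.2]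

lemma transpose_cMat_mul_cMat_apply_self (e : G.edgeSet) :
    ((cMat G o τ)ᵀ * cMat G o τ) e e = triDeg G (e : Sym2 V) := by
  simp only [Matrix.mul_apply, Matrix.transpose_apply, cMat_mul_self, Finset.sum_boole, triDeg]

lemma transpose_cMat_mul_cMat_apply_of_not_exists {e e' : G.edgeSet}
    (h : ¬∃ t : Triangle G, EdgeInTri G (e : Sym2 V) t ∧ EdgeInTri G (e' : Sym2 V) t) :
    ((cMat G o τ)ᵀ * cMat G o τ) e e' = 0 :=
  Finset.sum_eq_zero fun t _ => cMat_mul_cMat_eq_zero fun ht => h ⟨t, ht⟩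

lemma transpose_cMat_mul_cMat_apply_of_edgeInTri {e e' : G.edgeSet} (hne : e ≠ e')
    {t : Triangle G} (ht : EdgeInTri G (e : Sym2 V) t ∧ EdgeInTri G (e' : Sym2 V) t) :
    ((cMat G o τ)ᵀ * cMat G o τ) e e' = cMat G o τ t e * cMat G o τ t e' :=
  Finset.sum_eq_single_of_mem t (Finset.mem_univ t) fun _ _ hu =>
    cMat_mul_cMat_eq_zero fun hu' => hu (eq_of_edgeInTri o hne hu' ht)

lemma bMat_mul_transpose_apply_add_cMat_mul_cMat {e e' : G.edgeSet} (hne : e ≠ e')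
    {t : Triangle G} (ht : EdgeInTri G (e : Sym2 V) t ∧ EdgeInTri G (e' : Sym2 V) t) :
    (bMat G o * (bMat G o)ᵀ) e e' + cMat G o τ t e * cMat G o τ t e' = 0 := by
  obtain ⟨hxy, hyz, hxz⟩ := τ.distinct t
  have := hxy.symm
  have := hyz.symm
  have := hxz.symm
  rw [Ne, o.eq_iff] at hne
  rcases (edgeInTri_iff_agrees_or_disagrees o τ e t).mp ht.1 with he | he <;>
    rcases (edgeInTri_iff_agrees_or_disagrees o τ e' t).mp ht.2 with he' | he' <;>
    simp only [cMat_of_agrees, cMat_of_disagrees, he, he', bMat_mul_transpose_apply,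
      bMat_apply] <;>
    rcases he with ⟨h₁, h₂⟩ | ⟨h₁, h₂⟩ | ⟨h₁, h₂⟩ <;>
    rcases he' with ⟨h₃, h₄⟩ | ⟨h₃, h₄⟩ | ⟨h₃, h₄⟩ <;>
    simp_all

lemma helm_apply_self (e : G.edgeSet) : helm G o τ e e = triDeg G (e : Sym2 V) + 2 := by
  rw [helm, Matrix.add_apply, bMat_mul_transpose_apply_self, transpose_cMat_mul_cMat_apply_self,
    add_comm]

lemma helm_apply_of_not_exists {e e' : G.edgeSet}
    (h : ¬∃ t : Triangle G, EdgeInTri G (e : Sym2 V) t ∧ EdgeInTri G (e' : Sym2 V) t) :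
    helm G o τ e e' = (bMat G o * (bMat G o)ᵀ) e e' := by
  rw [helm, Matrix.add_apply, transpose_cMat_mul_cMat_apply_of_not_exists h, add_zero]

lemma helm_apply_of_exists {e e' : G.edgeSet} (hne : e ≠ e')
    (h : ∃ t : Triangle G, EdgeInTri G (e : Sym2 V) t ∧ EdgeInTri G (e' : Sym2 V) t) :
    helm G o τ e e' = 0 := by
  obtain ⟨t, ht⟩ := h
  rw [helm, Matrix.add_apply, transpose_cMat_mul_cMat_apply_of_edgeInTri hne ht,
    bMat_mul_transpose_apply_add_cMat_mul_cMat hne ht]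

/-- The entries of the Helmholtzian matrix `H(G) = B Bᵀ + Cᵀ C`:
`△(e) + 2` on the diagonal; `-1` if `e⁺ = e'⁻` or `e⁻ = e'⁺` and `e, e'` lie in no common
triangle; `1` if `e⁺ = e'⁺` or `e⁻ = e'⁻` and `e, e'` lie in no common triangle;
`0` otherwise. -/
theorem statement3 (G : SimpleGraph V) (o : Orientation G) (τ : TriOrientation G)
    (e e' : G.edgeSet) :
    (e' = e → helm G o τ e e' = (triDeg G (e : Sym2 V) : ℝ) + 2) ∧
    (e' ≠ e → (o.head e = o.tail e' ∨ o.tail e = o.head e') →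
      ¬(∃ t : Triangle G, EdgeInTri G (e : Sym2 V) t ∧ EdgeInTri G (e' : Sym2 V) t) →
      helm G o τ e e' = -1) ∧
    (e' ≠ e → (o.head e = o.head e' ∨ o.tail e = o.tail e') →
      ¬(∃ t : Triangle G, EdgeInTri G (e : Sym2 V) t ∧ EdgeInTri G (e' : Sym2 V) t) →
      helm G o τ e e' = 1) ∧
    (e' ≠ e →
      ¬((o.head e = o.tail e' ∨ o.tail e = o.head e') ∧
        ¬∃ t : Triangle G, EdgeInTri G (e : Sym2 V) t ∧ EdgeInTri G (e' : Sym2 V) t) →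
      ¬((o.head e = o.head e' ∨ o.tail e = o.tail e') ∧
        ¬∃ t : Triangle G, EdgeInTri G (e : Sym2 V) t ∧ EdgeInTri G (e' : Sym2 V) t) →
      helm G o τ e e' = 0) := by
  refine ⟨?_, fun hne hmeet hnt => ?_, fun hne hmeet hnt => ?_, fun hne hn₁ hn₂ => ?_⟩
  · rintro rfl
    exact helm_apply_self e'
  · rw [helm_apply_of_not_exists hnt]
    exact bMat_mul_transpose_apply_of_head_tail_meet hne.symm hmeet
  · rw [helm_apply_of_not_exists hnt]
    exact bMat_mul_transpose_apply_of_like_ends_meet hne.symm hmeet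
  · by_cases ht : ∃ t : Triangle G, EdgeInTri G (e : Sym2 V) t ∧ EdgeInTri G (e' : Sym2 V) t
    · exact helm_apply_of_exists hne.symm ht
    · simp only [ht, not_false_eq_true, and_true] at hn₁ hn₂
      rw [helm_apply_of_not_exists ht]
      exact bMat_mul_transpose_apply_of_not_meet hn₁ hn₂

end HelmPaper
end

section
/- Let G be a finite simple graph with an orientation of its edges. Every triangle of the signed graph Λ_R(G) that arises from three distinct edges of G sharing a common vertex is positive, i.e., the product of the signs of its three edges in Λ_R(G) equals +1. -/
open scoped Classical
open scoped Matrix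

namespace HelmPaper

variable {V : Type} [Fintype V] [DecidableEq V]

/-- The underlying graph of the signed graph `Λ_R(G)`: its vertices are the edges of `G`,
and two distinct edges of `G` are adjacent when they share an endpoint and lie in no
common triangle of `G` (this underlying adjacency does not depend on the orientation). -/
def lambdaR (G : SimpleGraph V) : SimpleGraph G.edgeSet where
  Adj e e' := e ≠ e' ∧ (∃ v : V, v ∈ (e : Sym2 V) ∧ v ∈ (e' : Sym2 V)) ∧
    ¬∃ t : Triangle G, EdgeInTri G (e : Sym2 V) t ∧ EdgeInTri G (e' : Sym2 V) t
  symm := by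
    constructor
    rintro e e' ⟨h₁, ⟨v, hv₁, hv₂⟩, h₃⟩
    exact ⟨h₁.symm, ⟨v, hv₂, hv₁⟩, fun ⟨t, ht₁, ht₂⟩ => h₃ ⟨t, ht₂, ht₁⟩⟩
  loopless := by constructor; rintro e ⟨h, _⟩; exact h rfl

/-- The sign of the edge `{e, e'}` of the signed graph `Λ_R(G)`: `+1` if `e⁺ = e'⁺` or
`e⁻ = e'⁻` (and no common triangle), `-1` if `e⁺ = e'⁻` or `e⁻ = e'⁺` (and no common
triangle), and `0` if `e` and `e'` are not adjacent in `Λ_R(G)`. -/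
noncomputable def lamSign (G : SimpleGraph V) (o : Orientation G) (e e' : G.edgeSet) : ℝ :=
  if (o.head e = o.head e' ∨ o.tail e = o.tail e') ∧
      ¬∃ t : Triangle G, EdgeInTri G (e : Sym2 V) t ∧ EdgeInTri G (e' : Sym2 V) t then 1
  else if (o.head e = o.tail e' ∨ o.tail e = o.head e') ∧
      ¬∃ t : Triangle G, EdgeInTri G (e : Sym2 V) t ∧ EdgeInTri G (e' : Sym2 V) t then -1
  else 0

end HelmPaper

/-!
For two edges `e, e'` of `G` through a common vertex `v` and in no common triangle, the sign of
`{e, e'}` in `Λ_R(G)` factors as `ε_e(v) ε_{e'}(v)`, where `ε_e(v) = ±1` according as `v` is the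
head or the tail of `e`. Around a triangle `e₁ e₂ e₃` of edges through `v` every factor
`ε_{eᵢ}(v)` then occurs twice, so the product of the three signs is a product of squares of `±1`.
-/

namespace HelmPaper

variable {V : Type}

lemma Orientation.head_ne_tail_s10 {G : SimpleGraph V} (o : Orientation G) (e : G.edgeSet) :
    o.head e ≠ o.tail e :=
  (G.mem_edgeSet.mp (o.consistent e ▸ e.2)).ne

lemma Orientation.mem_iff {G : SimpleGraph V} (o : Orientation G) (e : G.edgeSet) (v : V) :
    v ∈ (e : Sym2 V) ↔ o.head e = v ∨ o.tail e = v := by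
  rw [o.consistent e, Sym2.mem_iff, eq_comm, @eq_comm _ v]

noncomputable def signAt {G : SimpleGraph V} (o : Orientation G) (e : G.edgeSet) (v : V) : ℝ :=
  if o.head e = v then 1 else -1

lemma signAt_mul_self {G : SimpleGraph V} (o : Orientation G) (e : G.edgeSet) (v : V) :
    signAt o e v * signAt o e v = 1 := by
  unfold signAt; split_ifs <;> norm_num

variable [Fintype V] [DecidableEq V]

lemma lamSign_eq_signAt_mul {G : SimpleGraph V} (o : Orientation G) {e e' : G.edgeSet} {v : V}
    (hv : v ∈ (e : Sym2 V)) (hv' : v ∈ (e' : Sym2 V))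
    (hnt : ¬∃ t : Triangle G, EdgeInTri G (e : Sym2 V) t ∧ EdgeInTri G (e' : Sym2 V) t) :
    lamSign G o e e' = signAt o e v * signAt o e' v := by
  have hne := o.head_ne_tail_s10 e
  have hne' := o.head_ne_tail_s10 e'
  rw [o.mem_iff] at hv hv'
  rcases hv with hv | hv <;> rcases hv' with hv' | hv' <;>
    simp only [lamSign, signAt, hnt] <;> grind

theorem statement10_general (G : SimpleGraph V) (o : Orientation G)
    (e₁ e₂ e₃ : G.edgeSet)
    (v : V) (hv₁ : v ∈ (e₁ : Sym2 V)) (hv₂ : v ∈ (e₂ : Sym2 V)) (hv₃ : v ∈ (e₃ : Sym2 V))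
    (ha₁₂ : (lambdaR G).Adj e₁ e₂) (ha₁₃ : (lambdaR G).Adj e₁ e₃)
    (ha₂₃ : (lambdaR G).Adj e₂ e₃) :
    lamSign G o e₁ e₂ * lamSign G o e₂ e₃ * lamSign G o e₁ e₃ = 1 := by
  rw [lamSign_eq_signAt_mul o hv₁ hv₂ ha₁₂.2.2, lamSign_eq_signAt_mul o hv₂ hv₃ ha₂₃.2.2,
    lamSign_eq_signAt_mul o hv₁ hv₃ ha₁₃.2.2]
  calc signAt o e₁ v * signAt o e₂ v * (signAt o e₂ v * signAt o e₃ v) *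
        (signAt o e₁ v * signAt o e₃ v)
      = (signAt o e₁ v * signAt o e₁ v) * (signAt o e₂ v * signAt o e₂ v) *
          (signAt o e₃ v * signAt o e₃ v) := by ring
    _ = 1 := by simp only [signAt_mul_self, mul_one]

/-- Every triangle of `Λ_R(G)` arising from three distinct edges of `G`
sharing a common vertex is positive: the product of the signs of its three edges is `+1`. -/
theorem statement10 (G : SimpleGraph V) (o : Orientation G)
    (e₁ e₂ e₃ : G.edgeSet) (h₁₂ : e₁ ≠ e₂) (h₁₃ : e₁ ≠ e₃) (h₂₃ : e₂ ≠ e₃)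
    (v : V) (hv₁ : v ∈ (e₁ : Sym2 V)) (hv₂ : v ∈ (e₂ : Sym2 V)) (hv₃ : v ∈ (e₃ : Sym2 V))
    (ha₁₂ : (lambdaR G).Adj e₁ e₂) (ha₁₃ : (lambdaR G).Adj e₁ e₃)
    (ha₂₃ : (lambdaR G).Adj e₂ e₃) :
    lamSign G o e₁ e₂ * lamSign G o e₂ e₃ * lamSign G o e₁ e₃ = 1 :=
  statement10_general G o e₁ e₂ e₃ v hv₁ hv₂ hv₃ ha₁₂ ha₁₃ ha₂₃

end HelmPaper
end

section
/- Let G be a finite simple graph. If there exists an orientation of the edges and triangles of G such that every entry of the Helmholtzian matrix H(G) is non-negative, then G has no induced odd cycle of length ≥ 5. -/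
/-!
Let `e i` be the edge `v i v (i+1)` of an induced cycle of length at least 4. A triangle through
both `e i` and `e (i+1)` would contain the chord `v i v (i+2)`, so the `Cᵀ C` part of
`H(e i, e (i+1))` vanishes and the entry is `B(e i, w) B(e (i+1), w)` at the shared vertex
`w = v (i+1)`: it is `1` if `w` is the head of both edges or of neither, and `-1` otherwise.
Non-negativity therefore forces "`e i` points forward" to alternate along the cycle, which is
impossible when the length is odd.
-/

open scoped Classical
open scoped Matrix

namespace HelmPaper

variable {V : Type} [Fintype V] [DecidableEq V]

/-- The map `v : ZMod k → V` traces a cycle of length `k` in `G` (distinct vertices,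
consecutive ones adjacent). -/
def IsCycleIn (G : SimpleGraph V) (k : ℕ) (v : ZMod k → V) : Prop :=
  Function.Injective v ∧ ∀ i, G.Adj (v i) (v (i + 1))

/-- The map `v : ZMod k → V` traces an induced (chordless) cycle of length `k` in `G`. -/
def IsInducedCycleIn (G : SimpleGraph V) (k : ℕ) (v : ZMod k → V) : Prop :=
  IsCycleIn G k v ∧ ∀ i j, G.Adj (v i) (v j) → j = i + 1 ∨ i = j + 1

theorem _root_.ZMod.add_natCast_ne_self {k n : ℕ} (hn : 0 < n) (hnk : n < k) (i : ZMod k) :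
    i + n ≠ i := by
  rw [Ne, add_eq_left, ZMod.natCast_eq_zero_iff]
  exact fun hdvd => absurd (Nat.le_of_dvd hn hdvd) (by omega)

theorem _root_.ZMod.not_forall_iff_not_of_odd {k : ℕ} (hk : Odd k) (P : ZMod k → Prop) :
    ¬∀ i, P (i + 1) ↔ ¬P i := by
  intro hP
  have hparity : ∀ n : ℕ, P n ↔ (Even n ↔ P 0) := by
    intro n
    induction n with
    | zero => simp
    | succ n ih => rw [Nat.cast_succ, hP, ih, Nat.even_add_one]; tauto
  have hk' := hparity k
  rw [ZMod.natCast_self] at hk'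
  have hnot_even := Nat.not_even_iff_odd.2 hk
  tauto

namespace IsInducedCycleIn

variable {G : SimpleGraph V} {k : ℕ} {v : ZMod k → V}

omit [Fintype V] [DecidableEq V] in
theorem ne_add_two (hv : IsInducedCycleIn G k v) (hk : 3 ≤ k) (i : ZMod k) :
    v i ≠ v (i + 1 + 1) := by
  intro h
  have h2 := ZMod.add_natCast_ne_self (n := 2) (by norm_num) (by omega) i
  push_cast at h2
  exact h2 (by linear_combination (hv.1.1 h).symm)

omit [Fintype V] [DecidableEq V] in
theorem not_adj_add_two (hv : IsInducedCycleIn G k v) (hk : 4 ≤ k) (i : ZMod k) :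
    ¬G.Adj (v i) (v (i + 1 + 1)) := by
  intro hadj
  rcases hv.2 _ _ hadj with h | h
  · exact ZMod.add_natCast_ne_self (n := 1) (by norm_num) (by omega) (i + 1)
      (by simpa using h)
  · exact ZMod.add_natCast_ne_self (n := 3) (by norm_num) (by omega) i
      (by push_cast; linear_combination -h)

end IsInducedCycleIn

namespace Orientation

variable {G : SimpleGraph V} (o : Orientation G)

omit [Fintype V] [DecidableEq V] in
theorem mem_iff_eq_head_or_eq_tail (e : G.edgeSet) {w : V} :
    w ∈ (e : Sym2 V) ↔ w = o.head e ∨ w = o.tail e := by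
  rw [o.consistent e, Sym2.mem_iff]

omit [Fintype V] [DecidableEq V] in
theorem head_ne_iff_eq_of_eq_mk {e : G.edgeSet} {a b : V} (he : (e : Sym2 V) = s(a, b)) :
    o.head e ≠ a ↔ o.head e = b := by
  have hab : a ≠ b := (G.mem_edgeSet.1 (he ▸ e.2)).ne
  have hhead : o.head e = a ∨ o.head e = b := by
    rw [← Sym2.mem_iff, ← he, o.mem_iff_eq_head_or_eq_tail]
    exact Or.inl rfl
  constructor
  · exact hhead.resolve_left
  · rintro rfl; exact hab.symm

end Orientation

section Incidence

variable {G : SimpleGraph V} (o : Orientation G) (τ : TriOrientation G)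

omit [Fintype V] in
theorem bMat_apply_of_not_mem {e : G.edgeSet} {w : V} (hw : w ∉ (e : Sym2 V)) :
    bMat G o e w = 0 := by
  rw [o.mem_iff_eq_head_or_eq_tail, not_or] at hw
  simp [bMat, hw.1, hw.2]

omit [Fintype V] in
theorem bMat_apply_of_mem {e : G.edgeSet} {w : V} (hw : w ∈ (e : Sym2 V)) :
    bMat G o e w = if o.head e = w then 1 else -1 := by
  have hne : o.head e ≠ o.tail e :=
    (G.mem_edgeSet.1 (o.consistent e ▸ e.2)).ne
  rcases (o.mem_iff_eq_head_or_eq_tail e).1 hw with rfl | rfl <;> simp [bMat, hne, hne.symm]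

theorem bMat_mul_transpose_apply_of_eq_mk {e e' : G.edgeSet} {u w x : V}
    (he : (e : Sym2 V) = s(u, w)) (he' : (e' : Sym2 V) = s(w, x)) (hux : u ≠ x) :
    (bMat G o * (bMat G o)ᵀ) e e' = bMat G o e w * bMat G o e' w := by
  rw [Matrix.mul_apply, Finset.sum_eq_single w]
  · rfl
  · intro y _ hyw
    by_cases hyu : y = u
    · subst hyu
      rw [Matrix.transpose_apply, bMat_apply_of_not_mem o (e := e') (by simp [he', hyw, hux]),
        mul_zero]
    · rw [bMat_apply_of_not_mem o (e := e) (by simp [he, hyu, hyw]), zero_mul]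
  · simp

omit [Fintype V] in
theorem edgeInTri_of_cMat_ne_zero {t : Triangle G} {e : G.edgeSet} (h : cMat G o τ t e ≠ 0) :
    EdgeInTri G e t := by
  have hends : o.head e ∈ ({τ.fst t, τ.snd t, τ.trd t} : Finset V) ∧
      o.tail e ∈ ({τ.fst t, τ.snd t, τ.trd t} : Finset V) := by
    unfold cMat at h
    split_ifs at h with hA hD
    · rcases hA with ⟨h₁, h₂⟩ | ⟨h₁, h₂⟩ | ⟨h₁, h₂⟩ <;> simp [h₁, h₂]
    · rcases hD with ⟨h₁, h₂⟩ | ⟨h₁, h₂⟩ | ⟨h₁, h₂⟩ <;> simp [h₁, h₂]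
    · exact absurd rfl h
  rw [τ.consistent t] at hends
  intro y hy
  rcases (o.mem_iff_eq_head_or_eq_tail e).1 hy with rfl | rfl
  exacts [hends.1, hends.2]

theorem transpose_cMat_mul_cMat_apply_of_not_adj {e e' : G.edgeSet} {u x : V}
    (hu : u ∈ (e : Sym2 V)) (hx : x ∈ (e' : Sym2 V)) (hux : u ≠ x) (hnadj : ¬G.Adj u x) :
    ((cMat G o τ)ᵀ * cMat G o τ) e e' = 0 := by
  refine Finset.sum_eq_zero fun t _ => ?_
  by_contra hne
  obtain ⟨h, h'⟩ := mul_ne_zero_iff.1 hne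
  exact hnadj (t.2.2 (edgeInTri_of_cMat_ne_zero o τ h u hu)
    (edgeInTri_of_cMat_ne_zero o τ h' x hx) hux)

theorem helm_apply_of_eq_mk {e e' : G.edgeSet} {u w x : V}
    (he : (e : Sym2 V) = s(u, w)) (he' : (e' : Sym2 V) = s(w, x)) (hux : u ≠ x)
    (hnadj : ¬G.Adj u x) :
    helm G o τ e e' = bMat G o e w * bMat G o e' w := by
  rw [helm, Matrix.add_apply, bMat_mul_transpose_apply_of_eq_mk o he he' hux,
    transpose_cMat_mul_cMat_apply_of_not_adj o τ (by simp [he]) (by simp [he']) hux hnadj,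
    add_zero]

theorem head_eq_iff_of_helm_nonneg {e e' : G.edgeSet} {u w x : V}
    (he : (e : Sym2 V) = s(u, w)) (he' : (e' : Sym2 V) = s(w, x)) (hux : u ≠ x)
    (hnadj : ¬G.Adj u x) (h : 0 ≤ helm G o τ e e') :
    o.head e = w ↔ o.head e' = w := by
  rw [helm_apply_of_eq_mk o τ he he' hux hnadj, bMat_apply_of_mem o (by simp [he]),
    bMat_apply_of_mem o (by simp [he'])] at h
  split_ifs at h <;> norm_num at h <;> tauto

end Incidence

/-- If there exists an orientation of the edges and triangles of `G`
such that every entry of `H(G)` is non-negative, then `G` has no induced odd cycle of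
length at least `5`. -/
theorem statement12 (G : SimpleGraph V)
    (h : ∃ (o : Orientation G) (τ : TriOrientation G),
      ∀ e e' : G.edgeSet, 0 ≤ helm G o τ e e') :
    ¬∃ (k : ℕ) (v : ZMod k → V), 5 ≤ k ∧ Odd k ∧ IsInducedCycleIn G k v := by
  obtain ⟨o, τ, hH⟩ := h
  rintro ⟨k, v, hk, hodd, hv⟩
  let e : ZMod k → G.edgeSet := fun i => ⟨s(v i, v (i + 1)), hv.1.2 i⟩
  refine ZMod.not_forall_iff_not_of_odd hodd (fun i => o.head (e i) = v (i + 1)) fun i => ?_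
  have hturn : o.head (e i) = v (i + 1) ↔ o.head (e (i + 1)) = v (i + 1) :=
    head_eq_iff_of_helm_nonneg o τ (e := e i) (e' := e (i + 1)) rfl rfl
      (hv.ne_add_two (by omega) i) (hv.not_adj_add_two (by omega) i) (hH _ _)
  rw [hturn]
  exact (o.head_ne_iff_eq_of_eq_mk (e := e (i + 1)) rfl).symm

end HelmPaper
end
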